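/- Let H be a Hopf algebra over a field k with bijective antipode S, τ a Hopf algebra automorphism of H of finite order r, and (V, ρ) a finite-dimensional left H-module whose twisted exponent exp_τ(V) is finite. Then a positive integer k satisfies ρ(Γ^τ_{kr}(h)) = ε(h)·Id_V for all h ∈ H if and only if exp_τ(V) divides k. -/

import Mathlib

/-!
The antipode is an anti-coalgebra map, so `S⁻²τ` is a bijective coalgebra endomorphism `T`.
In the convolution algebra, `Γ_m = Id * T * ⋯ * T^{m-1}`, and since precomposition with a
coalgebra map is multiplicative, `Γ_{a+b} = Γ_a * (Γ_b ∘ T^a)`. If `Γ_a` acts on `V` through the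
counit, this reads `ρ(Γ_{a+b}(h)) = ρ(Γ_b(T^a h))`, so `Γ_{a+b}` acts trivially iff `Γ_b` does.
The set of `n` for which `Γ_{nr}` acts trivially is therefore closed under addition and under
subtraction of its elements, hence consists of the multiples of its least positive element.
-/

open scoped TensorProduct

noncomputable section

namespace TwistedExponent

variable (k H : Type*) [CommRing k] [Ring H] [HopfAlgebra k H]

/-- The convolution product of two linear endomorphisms of a bialgebra:
`f * g = μ ∘ (f ⊗ g) ∘ Δ`. -/
def conv (f g : H →ₗ[k] H) : H →ₗ[k] H :=
  LinearMap.mul' k H ∘ₗ TensorProduct.map f g ∘ₗ Coalgebra.comul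

/-- The convolution unit `η ∘ ε`, i.e. `h ↦ ε(h)·1`. -/
def convOne : H →ₗ[k] H := Algebra.linearMap k H ∘ₗ Coalgebra.counit

/-- `gamma T m` is the map `Γ_m = μ^m ∘ (Id ⊗ T ⊗ T² ⊗ ⋯ ⊗ T^{m-1}) ∘ Δ^{m-1}`, expressed as
the convolution product `Id * T * T² * ⋯ * T^{m-1}` (with `gamma T 0` the convolution unit). -/
def gamma (T : H →ₗ[k] H) : ℕ → (H →ₗ[k] H)
  | 0 => convOne k H
  | (m + 1) => conv k H (gamma T m) (T ^ m)

/-- The inverse of the antipode, given that the antipode is bijective. -/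
def antipodeInv (hS : Function.Bijective (HopfAlgebra.antipode (R := k) (A := H))) :
    H →ₗ[k] H :=
  (LinearEquiv.ofBijective (HopfAlgebra.antipode (R := k) (A := H)) hS).symm

/-- The map `S⁻² ∘ τ`. -/
def twist (hS : Function.Bijective (HopfAlgebra.antipode (R := k) (A := H)))
    (τ : H →ₗ[k] H) : H →ₗ[k] H :=
  antipodeInv k H hS ∘ₗ antipodeInv k H hS ∘ₗ τ

/-- `f : H → H` has exact (finite) order `r`. -/
def HasOrder (τ : H → H) (r : ℕ) : Prop :=
  0 < r ∧ τ^[r] = id ∧ ∀ s : ℕ, 0 < s → s < r → τ^[s] ≠ id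

/-- The map `Γ_m` acts on the `H`-module `V` as `ε·Id_V`, i.e.
`ρ(Γ_m(h)) = ε(h)·Id_V` for all `h ∈ H`. -/
def GammaTrivOn (T : H →ₗ[k] H) (m : ℕ)
    (V : Type*) [AddCommGroup V] [Module k V] [Module H V] [IsScalarTower k H V] : Prop :=
  ∀ (h : H) (v : V), gamma k H T m h • v = Coalgebra.counit (R := k) h • v

end TwistedExponent

open Coalgebra HopfAlgebra WithConv

section AntipodeComul

variable {k H : Type*} [CommRing k] [Ring H] [HopfAlgebra k H]

lemma HopfAlgebra.sum_antipode_tmul_one_mul_comul (y : H) {ι : Type*} (𝓡 : Repr k y ι) :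
    ∑ j ∈ 𝓡.index, (antipode k (𝓡.left j) ⊗ₜ[k] (1 : H)) * comul (𝓡.right j) = 1 ⊗ₜ y := by
  have coassoc := congr((TensorProduct.map (LinearMap.mul' k H ∘ₗ
      TensorProduct.map (antipode k) .id) .id ∘ₗ (TensorProduct.assoc k H H H).symm.toLinearMap)
    $(sum_tmul_tmul_eq 𝓡 (fun i => ℛ k (𝓡.left i)) (fun i => ℛ k (𝓡.right i))))
  simp only [map_sum, LinearMap.comp_apply, LinearEquiv.coe_coe, TensorProduct.assoc_symm_tmul,
    TensorProduct.map_tmul, LinearMap.mul'_apply, LinearMap.id_apply] at coassoc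
  simp only [← (ℛ k _).eq, Finset.mul_sum, Algebra.TensorProduct.tmul_mul_tmul, one_mul,
    ← coassoc, ← TensorProduct.sum_tmul, sum_antipode_mul_eq_algebraMap_counit,
    Algebra.algebraMap_eq_smul_one, TensorProduct.smul_tmul, ← TensorProduct.tmul_sum,
    sum_counit_smul]

lemma LinearMap.comul_left_inv :
    toConv (TensorProduct.map (antipode k) (antipode k) ∘ₗ
      (TensorProduct.comm k H H).toLinearMap ∘ₗ comul) * toConv comul = 1 := by
  ext a
  let 𝓡 := ℛ k a
  have coassoc := congr((LinearMap.mul' k (H ⊗[k] H) ∘ₗ TensorProduct.map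
      (TensorProduct.map (antipode k) (antipode k) ∘ₗ (TensorProduct.comm k H H).toLinearMap)
        comul ∘ₗ (TensorProduct.assoc k H H H).symm.toLinearMap)
    $(sum_tmul_tmul_eq 𝓡 (fun i => ℛ k (𝓡.left i)) (fun i => ℛ k (𝓡.right i))))
  simp only [map_sum, LinearMap.comp_apply, LinearEquiv.coe_coe, TensorProduct.assoc_symm_tmul,
    TensorProduct.map_tmul, LinearMap.mul'_apply, TensorProduct.comm_tmul] at coassoc
  have factor (x y : H) (z : H ⊗[k] H) : antipode k y ⊗ₜ[k] antipode k x * z =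
      (1 ⊗ₜ antipode k x) * ((antipode k y ⊗ₜ[k] (1 : H)) * z) := by
    rw [← mul_assoc, Algebra.TensorProduct.tmul_mul_tmul, one_mul, mul_one]
  -- In Sweedler notation: `∑ S a₍₂₎ a₍₃₎ ⊗ S a₍₁₎ a₍₄₎ = ∑ (1 ⊗ S a₍₁₎) ((S a₍₂₎ ⊗ 1) Δ a₍₃₎)`
  -- by coassociativity, and the inner factor collapses to `1 ⊗ a₍₂₎`.
  rw [𝓡.convMul_apply]
  simp only [LinearMap.comp_apply, ← (ℛ k (𝓡.left _)).eq, map_sum, LinearEquiv.coe_coe,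
    TensorProduct.comm_tmul, TensorProduct.map_tmul, Finset.sum_mul]
  rw [coassoc]
  simp only [factor, ← Finset.mul_sum, sum_antipode_tmul_one_mul_comul,
    Algebra.TensorProduct.tmul_mul_tmul, one_mul, ← TensorProduct.tmul_sum,
    sum_antipode_mul_eq_algebraMap_counit]
  simp [Algebra.algebraMap_eq_smul_one, Algebra.TensorProduct.one_def]

lemma HopfAlgebra.comul_comp_antipode :
    comul ∘ₗ antipode k = TensorProduct.map (antipode k) (antipode k) ∘ₗ
      (TensorProduct.comm k H H).toLinearMap ∘ₗ (comul : H →ₗ[k] H ⊗[k] H) :=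
  toConv_injective (left_inv_eq_right_inv LinearMap.comul_left_inv
    LinearMap.comul_right_inv).symm

lemma HopfAlgebra.comul_antipode (a : H) :
    comul (antipode k a) = TensorProduct.map (antipode k) (antipode k)
      (TensorProduct.comm k H H (comul a)) :=
  congr($comul_comp_antipode a)

variable (k H) in
def HopfAlgebra.antipodeSq : H →ₗc[k] H where
  toLinearMap := antipode k ∘ₗ antipode k
  counit_comp := by ext; simp
  map_comp_comul := by
    ext a
    simp only [LinearMap.comp_apply, comul_antipode, TensorProduct.map_comm,
      TensorProduct.comm_comm, TensorProduct.map_comp]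

end AntipodeComul

lemma CoalgHom.toLinearMap_pow {R A : Type*} [CommSemiring R] [AddCommMonoid A] [Module R A]
    [CoalgebraStruct R A] (f : A →ₗc[R] A) (n : ℕ) :
    ((f ^ n : A →ₗc[R] A) : A →ₗ[R] A) = (f : A →ₗ[R] A) ^ n := by
  induction n with
  | zero => rfl
  | succ n ih => rw [pow_succ, pow_succ, ← ih]; rfl

lemma LinearMap.convMul_smul_of_smul_eq_counit_smul {R C A V : Type*} [CommSemiring R]
    [AddCommMonoid C] [Module R C] [Coalgebra R C] [Semiring A] [Algebra R A] [AddCommMonoid V]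
    [Module R V] [Module A V] [IsScalarTower R A V] {f : C →ₗ[R] A}
    (hf : ∀ (c : C) (v : V), f c • v = counit (R := R) c • v) (g : C →ₗ[R] A) (c : C) (v : V) :
    (toConv f * toConv g) c • v = g c • v := by
  rw [(ℛ R c).convMul_apply, Finset.sum_smul]
  simp only [mul_smul, hf, ← smul_assoc, ← Finset.sum_smul, ← map_smul, ← map_sum,
    sum_counit_smul]

theorem Nat.iff_dvd_of_isLeast {P : ℕ → Prop} {e : ℕ} (hP : ∀ a b, P a → (P (a + b) ↔ P b))
    (he : IsLeast {n | 0 < n ∧ P n} e) (n : ℕ) : P n ↔ e ∣ n := by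
  obtain ⟨⟨he_pos, hPe⟩, he_min⟩ := he
  have hP_mul (q : ℕ) : P (e * q) := by
    induction q with
    | zero => simpa using (hP e 0 hPe).1 hPe
    | succ q ih => rw [mul_add_one, add_comm]; exact (hP e _ hPe).2 ih
  rw [Nat.dvd_iff_mod_eq_zero]
  conv_lhs => rw [← Nat.div_add_mod n e, hP _ _ (hP_mul (n / e))]
  refine ⟨fun hn => ?_, fun hn => ?_⟩
  · by_contra hne
    exact absurd (he_min ⟨Nat.pos_of_ne_zero hne, hn⟩) (not_le.2 (Nat.mod_lt n he_pos))
  · simpa [hn] using hP_mul 0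

namespace TwistedExponent

variable {k H : Type*} [CommRing k] [Ring H] [HopfAlgebra k H]

def twistCoalgHom (hS : Function.Bijective (antipode k : H →ₗ[k] H)) (τ : H ≃ₐc[k] H) :
    H →ₗc[k] H :=
  ((CoalgEquiv.ofBijective (f := antipodeSq k H) (hS.comp hS)).symm : H →ₗc[k] H).comp
    (τ : H →ₗc[k] H)

lemma toLinearMap_twistCoalgHom (hS : Function.Bijective (antipode k : H →ₗ[k] H))
    (τ : H ≃ₐc[k] H) : (twistCoalgHom hS τ : H →ₗ[k] H) = twist k H hS τ := by
  have hS' (x : H) : antipode k (antipodeInv k H hS x) = x :=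
    (LinearEquiv.ofBijective _ hS).apply_symm_apply x
  ext a
  apply (CoalgEquiv.ofBijective (f := antipodeSq k H) (hS.comp hS)).injective
  calc _ = τ a := CoalgEquiv.apply_symm_apply _ (τ a)
    _ = antipode k (antipode k (antipodeInv k H hS (antipodeInv k H hS (τ a)))) := by
      rw [hS', hS']

lemma surjective_twistCoalgHom (hS : Function.Bijective (antipode k : H →ₗ[k] H))
    (τ : H ≃ₐc[k] H) : Function.Surjective (twistCoalgHom hS τ) :=
  (EquivLike.surjective (CoalgEquiv.ofBijective (f := antipodeSq k H) (hS.comp hS)).symm).comp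
    (EquivLike.surjective τ)

lemma toConv_gamma_succ (T : H →ₗ[k] H) (m : ℕ) :
    toConv (gamma k H T (m + 1)) = toConv (gamma k H T m) * toConv (T ^ m) := rfl

lemma toConv_gamma_add (T : H →ₗc[k] H) (a b : ℕ) :
    toConv (gamma k H T (a + b)) =
      toConv (gamma k H T a) * toConv (gamma k H T b ∘ₗ ((T : H →ₗ[k] H) ^ a)) := by
  induction b with
  | zero =>
    have : toConv (gamma k H T 0 ∘ₗ ((T : H →ₗ[k] H) ^ a)) = 1 := by
      rw [← CoalgHom.toLinearMap_pow]
      ext x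
      simp [gamma, convOne]
    rw [this, mul_one]
    rfl
  | succ b ih =>
    have hpow : (T : H →ₗ[k] H) ^ (a + b) = ((T : H →ₗ[k] H) ^ b) ∘ₗ ((T : H →ₗ[k] H) ^ a) := by
      rw [add_comm, pow_add]
      rfl
    have h := LinearMap.convMul_comp_coalgHom_distrib (toConv (gamma k H T b))
      (toConv ((T : H →ₗ[k] H) ^ b)) (T ^ a)
    rw [CoalgHom.toLinearMap_eq_coe, CoalgHom.toLinearMap_pow] at h
    rw [← add_assoc, toConv_gamma_succ, ih, mul_assoc, hpow]
    exact congrArg _ (congrArg toConv h).symm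

lemma gammaTrivOn_add_iff {V : Type*} [AddCommGroup V] [Module k V] [Module H V]
    [IsScalarTower k H V] {T : H →ₗc[k] H} (hT : Function.Surjective T) {a : ℕ} (b : ℕ)
    (ha : GammaTrivOn k H T a V) :
    GammaTrivOn k H T (a + b) V ↔ GammaTrivOn k H T b V := by
  have h_add (h : H) (v : V) :
      gamma k H T (a + b) h • v = gamma k H T b (((T : H →ₗ[k] H) ^ a) h) • v := by
    rw [← ofConv_toConv (gamma k H T (a + b)), toConv_gamma_add]
    exact LinearMap.convMul_smul_of_smul_eq_counit_smul ha _ h v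
  have h_counit (h : H) : counit (R := k) (((T : H →ₗ[k] H) ^ a) h) = counit h := by
    rw [← CoalgHom.toLinearMap_pow]
    exact CoalgHomClass.counit_comp_apply (T ^ a) h
  have h_surj : Function.Surjective ((T : H →ₗ[k] H) ^ a) := by
    rw [Module.End.coe_pow]
    exact hT.iterate a
  refine ⟨fun hab h v => ?_, fun hb h v => by rw [h_add, hb, h_counit]⟩
  obtain ⟨h, rfl⟩ := h_surj h
  simpa only [h_add, h_counit] using hab h v

end TwistedExponent

open TwistedExponent

theorem stmt5_general {k H : Type*} [Field k] [Ring H] [HopfAlgebra k H]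
    (hS : Function.Bijective (HopfAlgebra.antipode (R := k) (A := H)))
    (τ : H ≃ₐc[k] H) (r : ℕ)
    (V : Type*) [AddCommGroup V] [Module k V] [Module H V] [IsScalarTower k H V]
    (e : ℕ)
    (he : IsLeast {n : ℕ | 0 < n ∧
      GammaTrivOn k H (twist k H hS (τ : H →ₗ[k] H)) (n * r) V} e) :
    ∀ n : ℕ, 0 < n →
      (GammaTrivOn k H (twist k H hS (τ : H →ₗ[k] H)) (n * r) V ↔ e ∣ n) := by
  intro n _
  rw [← toLinearMap_twistCoalgHom] at he ⊢
  refine Nat.iff_dvd_of_isLeast (P := fun m => GammaTrivOn k H (twistCoalgHom hS τ) (m * r) V)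
    (fun a b ha => ?_) he n
  rw [add_mul]
  exact gammaTrivOn_add_iff (surjective_twistCoalgHom hS τ) _ ha

/-- Let `H` be a Hopf algebra over a field `k` with bijective antipode `S`,
`τ` a Hopf algebra automorphism of `H` of finite order `r`, and `(V, ρ)` a finite-dimensional
left `H`-module whose twisted exponent `e = exp_τ(V)` (the least `e ≥ 1` with
`ρ(Γ^τ_{er}(h)) = ε(h)·Id_V` for all `h`) is finite.  Then a positive integer `n` satisfies
`ρ(Γ^τ_{nr}(h)) = ε(h)·Id_V` for all `h ∈ H` if and only if `e` divides `n`. -/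
theorem stmt5 {k H : Type*} [Field k] [Ring H] [HopfAlgebra k H]
    (hS : Function.Bijective (HopfAlgebra.antipode (R := k) (A := H)))
    (τ : H ≃ₐc[k] H) (r : ℕ) (hr : HasOrder H (⇑τ) r)
    (V : Type*) [AddCommGroup V] [Module k V] [Module H V] [IsScalarTower k H V]
    [FiniteDimensional k V]
    (e : ℕ)
    (he : IsLeast {n : ℕ | 0 < n ∧
      GammaTrivOn k H (twist k H hS (τ : H →ₗ[k] H)) (n * r) V} e) :
    ∀ n : ℕ, 0 < n →
      (GammaTrivOn k H (twist k H hS (τ : H →ₗ[k] H)) (n * r) V ↔ e ∣ n) :=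
  stmt5_general hS τ r V e he
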